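/- A word identity u ≈ v holds in (hypo_2, ♯) if and only if: (i) u ≈ v is balanced (occ(x, u) = occ(x, v) for every x ∈ X ∪ X*); and (ii) for any x, y ∈ con(u): (a) if x, y ∈ mix(u), then {x, y} ≺_u {x*, y*} iff {x, y} ≺_v {x*, y*}; (b) if x ∈ mix(u) and y ∉ mix(u), then x ≺_u {x*, y} iff x ≺_v {x*, y}, and {x, y} ≺_u x* iff {x, y} ≺_v x*; (c) if x, y ∉ mix(u), then x ≺_u y iff x ≺_v y. -/

import Mathlib

open FreeMonoid in
/-- The defining relations of the hypoplactic monoid of rank `n` (letters `0,…,n-1`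
standing for `1,…,n`): `acb = cab` (`a ≤ b < c`), `bac = bca` (`a < b ≤ c`),
`cadb = acbd` (`a ≤ b < c ≤ d`), `bdac = dbca` (`a < b ≤ c < d`). -/
def HypoRel (n : ℕ) : FreeMonoid (Fin n) → FreeMonoid (Fin n) → Prop := fun u v =>
  (∃ a b c : Fin n, a ≤ b ∧ b < c ∧ u = of a * of c * of b ∧ v = of c * of a * of b) ∨
  (∃ a b c : Fin n, a < b ∧ b ≤ c ∧ u = of b * of a * of c ∧ v = of b * of c * of a) ∨
  (∃ a b c d : Fin n, a ≤ b ∧ b < c ∧ c ≤ d ∧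
    u = of c * of a * of d * of b ∧ v = of a * of c * of b * of d) ∨
  (∃ a b c d : Fin n, a < b ∧ b ≤ c ∧ c < d ∧
    u = of b * of d * of a * of c ∧ v = of d * of b * of c * of a)

/-- The congruence on the free monoid generated by the hypoplactic relations. -/
def hypoCon (n : ℕ) : Con (FreeMonoid (Fin n)) := conGen (HypoRel n)

/-- The hypoplactic monoid of rank `n`. -/
abbrev Hypo (n : ℕ) : Type := (hypoCon n).Quotient

/-- Schützenberger's involution on words: reverse the word and apply the
order-reversing permutation `i ↦ n+1−i` (here `Fin.rev`) to each letter. -/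
def wordSharp (n : ℕ) (w : FreeMonoid (Fin n)) : FreeMonoid (Fin n) :=
  FreeMonoid.ofList (((FreeMonoid.toList w).map Fin.rev).reverse)

theorem wordSharp_mul {n : ℕ} (u v : FreeMonoid (Fin n)) :
    wordSharp n (u * v) = wordSharp n v * wordSharp n u := by
  simp [wordSharp]

theorem wordSharp_of {n : ℕ} (x : Fin n) :
    wordSharp n (FreeMonoid.of x) = FreeMonoid.of x.rev := rfl

/-- The hypoplactic congruence is compatible with Schützenberger's involution. -/
theorem wordSharp_wd {n : ℕ} {u v : FreeMonoid (Fin n)} (h : hypoCon n u v) :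
    hypoCon n (wordSharp n u) (wordSharp n v) := by
  have h' : ConGen.Rel (HypoRel n) u v := h
  clear h
  show ConGen.Rel (HypoRel n) (wordSharp n u) (wordSharp n v)
  induction h' with
  | of u v huv =>
    apply ConGen.Rel.of
    rcases huv with ⟨a,b,c,hab,hbc,hu,hv⟩ | ⟨a,b,c,hab,hbc,hu,hv⟩ |
      ⟨a,b,c,d,hab,hbc,hcd,hu,hv⟩ | ⟨a,b,c,d,hab,hbc,hcd,hu,hv⟩
    · refine Or.inr (Or.inl ⟨c.rev, b.rev, a.rev, Fin.rev_lt_rev.mpr hbc,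
        Fin.rev_le_rev.mpr hab, ?_, ?_⟩)
      · subst hu; simp [wordSharp_mul, wordSharp_of, mul_assoc]
      · subst hv; simp [wordSharp_mul, wordSharp_of, mul_assoc]
    · refine Or.inl ⟨c.rev, b.rev, a.rev, Fin.rev_le_rev.mpr hbc,
        Fin.rev_lt_rev.mpr hab, ?_, ?_⟩
      · subst hu; simp [wordSharp_mul, wordSharp_of, mul_assoc]
      · subst hv; simp [wordSharp_mul, wordSharp_of, mul_assoc]
    · refine Or.inr (Or.inr (Or.inl ⟨d.rev, c.rev, b.rev, a.rev,
        Fin.rev_le_rev.mpr hcd, Fin.rev_lt_rev.mpr hbc, Fin.rev_le_rev.mpr hab, ?_, ?_⟩))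
      · subst hu; simp [wordSharp_mul, wordSharp_of, mul_assoc]
      · subst hv; simp [wordSharp_mul, wordSharp_of, mul_assoc]
    · refine Or.inr (Or.inr (Or.inr ⟨d.rev, c.rev, b.rev, a.rev,
        Fin.rev_lt_rev.mpr hcd, Fin.rev_le_rev.mpr hbc, Fin.rev_lt_rev.mpr hab, ?_, ?_⟩))
      · subst hu; simp [wordSharp_mul, wordSharp_of, mul_assoc]
      · subst hv; simp [wordSharp_mul, wordSharp_of, mul_assoc]
  | refl x => exact ConGen.Rel.refl _
  | symm _ ih => exact ih.symm
  | trans _ _ ih1 ih2 => exact ih1.trans ih2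
  | mul _ _ ih1 ih2 =>
    rw [wordSharp_mul, wordSharp_mul]
    exact ConGen.Rel.mul ih2 ih1

/-- Schützenberger's involution `♯` on the hypoplactic monoid of rank `n`. -/
def hypoSharp (n : ℕ) : Hypo n → Hypo n :=
  Quotient.map' (wordSharp n) fun _ _ h => wordSharp_wd h

/-- Variables: `(n, false)` is the plain variable `x_n`, `(n, true)` is the starred
variable `x_n*`. -/
abbrev Var : Type := ℕ × Bool
/-- A word over the variables `X ∪ X*`. -/
abbrev Word : Type := List Var

/-- The starred counterpart of a variable. -/
def vstar (x : Var) : Var := (x.1, !x.2)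

def evalVar {M : Type*} [Monoid M] (star : M → M) (φ : ℕ → M) (x : Var) : M :=
  if x.2 then star (φ x.1) else φ x.1

/-- Evaluation of a word in a monoid `M` equipped with a unary operation `star`,
under a substitution `φ : X → M` (extended by `φ(x*) = φ(x)*`). -/
def evalW {M : Type*} [Monoid M] (star : M → M) (φ : ℕ → M) (w : Word) : M :=
  (w.map (evalVar star φ)).prod

/-- `(M, star)` satisfies the word identity `u ≈ v`. -/
def SatW {M : Type*} [Monoid M] (star : M → M) (u v : Word) : Prop :=
  ∀ φ : ℕ → M, evalW star φ u = evalW star φ v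

/-- `Prec u x y` : the last occurrence of `x` precedes the first occurrence of `y`
in `u` (every occurrence of `x` is to the left of every occurrence of `y`). -/
def Prec (u : Word) (x y : Var) : Prop :=
  ∀ i j : Fin u.length, u.get i = x → u.get j = y → (i : ℕ) < (j : ℕ)

/-- `{xs} ≺_u {ys}` : pairwise `Prec`. -/
def PrecAll (u : Word) (xs ys : List Var) : Prop :=
  ∀ x ∈ xs, ∀ y ∈ ys, Prec u x y

/-- `x ∈ mix(u)` : both `x` and `x*` occur in `u`. -/
def Mix (u : Word) (x : Var) : Prop := x ∈ u ∧ vstar x ∈ u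
/-- `x ∈ lin(u)` : `x ∉ mix(u)` and `x` occurs exactly once in `u`. -/
def Lin (u : Word) (x : Var) : Prop := ¬ Mix u x ∧ u.count x = 1
/-- `x ∈ ml(u)` : `x ∈ mix(u)` and `x` occurs exactly once in `u`. -/
def Ml (u : Word) (x : Var) : Prop := Mix u x ∧ u.count x = 1
/-- The word identity `u ≈ v` is balanced. -/
def BalancedId (u v : Word) : Prop := ∀ x : Var, u.count x = v.count x

/-- Condition (ii) from the characterizations: for any `x, y ∈ con(u)`,
(a) if `x, y ∈ mix(u)` then `{x,y} ≺_u {x*,y*}` iff `{x,y} ≺_v {x*,y*}`;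
(b) if `x ∈ mix(u)`, `y ∉ mix(u)` then `x ≺_u {x*,y}` iff `x ≺_v {x*,y}` and
`{x,y} ≺_u x*` iff `{x,y} ≺_v x*`;
(c) if `x, y ∉ mix(u)` then `x ≺_u y` iff `x ≺_v y`. -/
def CondII (u v : Word) : Prop :=
  ∀ x y : Var, x ∈ u → y ∈ u →
    ((Mix u x ∧ Mix u y →
      (PrecAll u [x, y] [vstar x, vstar y] ↔ PrecAll v [x, y] [vstar x, vstar y])) ∧
     (Mix u x ∧ ¬ Mix u y →
      ((PrecAll u [x] [vstar x, y] ↔ PrecAll v [x] [vstar x, y]) ∧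
       (PrecAll u [x, y] [vstar x] ↔ PrecAll v [x, y] [vstar x]))) ∧
     (¬ Mix u x ∧ ¬ Mix u y → (Prec u x y ↔ Prec v x y)))

/-!
The monoid `hypo₂` is faithfully modelled by the triples `(p, q, i)` recording the
numbers of letters `1` and `2` and whether some `2` precedes some `1`: the normal forms `1ᵖ 2^q`
and `1^(p-1) 2 1 2^(q-1)` show that the triple determines the element. The involution `♯` swaps `p`
and `q`. Under an assignment, the counts of a word are additive, and its inversion bit is set iff
some variable evaluates to an inverted element or `a*` precedes `b` for some `a, b` in the set `S`
of variables evaluating with a letter `1`; assignments by `0/1`-counts realise every `S`. So `u ≈ v`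
holds iff it is balanced and `u`, `v` agree, for every `S`, on whether such `a*, b ∈ S` exist.
This is monotone in `S`, so two-element sets `{c, d}` suffice, where it fails iff `c, d` precede
`c*, d*`; discarding the letters absent from the words, conditions (a)–(c) are exactly these
statements.
-/

open scoped List

def HasInversion (w : Word) (S : Set Var) : Prop :=
  ∃ a ∈ S, ∃ b ∈ S, [vstar a, b] <+ w

section Words

variable {w : Word} {x y c d : Var}

@[simp] theorem vstar_vstar (x : Var) : vstar (vstar x) = x := by
  simp [vstar]

theorem vstar_ne (x : Var) : vstar x ≠ x := by
  simp [vstar, Prod.ext_iff]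

theorem vstar_injective : Function.Injective vstar :=
  Function.LeftInverse.injective vstar_vstar

theorem prec_iff_not_sublist (hxy : x ≠ y) : Prec w x y ↔ ¬[y, x] <+ w := by
  have : ¬[y, x] <+ w ↔ w.Pairwise fun a b => ¬(a = y ∧ b = x) := by
    rw [List.pairwise_iff_forall_sublist]
    exact ⟨fun h _ _ hab ⟨hay, hbx⟩ => h (hay ▸ hbx ▸ hab), fun h hs => h hs ⟨rfl, rfl⟩⟩
  rw [this, List.pairwise_iff_getElem]
  constructor
  · rintro h i j hi hj hij ⟨hy, hx⟩
    exact absurd (h ⟨j, hj⟩ ⟨i, hi⟩ hx hy) (by simp only; omega)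
  · intro h i j hx hy
    rcases lt_trichotomy (i : ℕ) j with hij | hij | hij
    · exact hij
    · exact absurd (hx.symm.trans (Fin.ext hij ▸ hy)) hxy
    · exact absurd ⟨hy, hx⟩ (h j i j.2 i.2 hij)

theorem not_prec_self (hx : x ∈ w) : ¬Prec w x x := by
  obtain ⟨i, hi⟩ := List.mem_iff_get.mp hx
  exact fun h => lt_irrefl _ (h i i hi hi)

theorem precAll_iff_mem {xs ys : List Var} :
    PrecAll w xs ys ↔ ∀ x ∈ w, ∀ y ∈ w, x ∈ xs → y ∈ ys → Prec w x y := by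
  refine ⟨fun h x _ y _ hx hy => h x hx y hy, fun h x hx y hy i j hi hj => ?_⟩
  exact h x (hi ▸ List.get_mem w i) y (hj ▸ List.get_mem w j) hx hy i j hi hj

theorem precAll_congr {xs ys xs' ys' : List Var} (hxs : ∀ a ∈ w, a ∈ xs ↔ a ∈ xs')
    (hys : ∀ a ∈ w, a ∈ ys ↔ a ∈ ys') : PrecAll w xs ys ↔ PrecAll w xs' ys' := by
  simp only [precAll_iff_mem]
  exact forall₂_congr fun x hx => forall₂_congr fun y hy => by rw [hxs x hx, hys y hy]

theorem precAll_iff_not_hasInversion (hdc : d ≠ vstar c) :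
    PrecAll w [c, d] [vstar c, vstar d] ↔ ¬HasInversion w {c, d} := by
  have hcd : c ≠ vstar d := fun h => hdc (by rw [h, vstar_vstar])
  simp only [PrecAll, HasInversion, List.mem_cons, List.not_mem_nil, or_false,
    Set.mem_insert_iff, Set.mem_singleton_iff, forall_eq_or_imp, forall_eq, exists_eq_or_imp,
    exists_eq_left, not_or]
  rw [prec_iff_not_sublist (vstar_ne c).symm, prec_iff_not_sublist hcd,
    prec_iff_not_sublist hdc, prec_iff_not_sublist (vstar_ne d).symm]
  tauto

theorem precAll_singleton_pair_iff (hy : vstar y ∉ w) (hxy : x ≠ y) :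
    PrecAll w [x] [vstar x, y] ↔ ¬HasInversion w {x, vstar y} := by
  rw [← precAll_iff_not_hasInversion (vstar_injective.ne hxy).symm, vstar_vstar]
  exact precAll_congr (fun a ha => by simp [ne_of_mem_of_not_mem ha hy]) fun _ _ => Iff.rfl

theorem precAll_pair_singleton_iff (hy : vstar y ∉ w) (hyx : y ≠ vstar x) :
    PrecAll w [x, y] [vstar x] ↔ ¬HasInversion w {x, y} := by
  rw [← precAll_iff_not_hasInversion hyx]
  exact precAll_congr (fun _ _ => Iff.rfl) fun a ha => by simp [ne_of_mem_of_not_mem ha hy]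

theorem prec_iff_not_hasInversion (hx : vstar x ∉ w) (hy : vstar y ∉ w) (hxy : x ≠ y) :
    Prec w x y ↔ ¬HasInversion w {x, vstar y} := by
  rw [← precAll_iff_not_hasInversion (vstar_injective.ne hxy).symm, vstar_vstar]
  have : PrecAll w [x] [y] ↔ Prec w x y := by simp [PrecAll]
  rw [← this]
  exact precAll_congr (fun a ha => by simp [ne_of_mem_of_not_mem ha hy])
    fun a ha => by simp [ne_of_mem_of_not_mem ha hx]

theorem not_precAll_vstar (hx : x ∈ w) : ¬PrecAll w [x, vstar x] [vstar x, vstar (vstar x)] :=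
  fun h => not_prec_self hx (h x (by simp) x (by simp))

theorem Mix.vstar (h : Mix w x) : Mix w (vstar x) := ⟨h.2, by simpa using h.1⟩

theorem vstar_not_mem_of_not_mix (h : ¬Mix w x) (hx : x ∈ w) : vstar x ∉ w :=
  fun h' => h ⟨hx, h'⟩

theorem HasInversion.mono {S T : Set Var} (hST : S ⊆ T) (h : HasInversion w S) :
    HasInversion w T :=
  let ⟨a, ha, b, hb, hab⟩ := h
  ⟨a, hST ha, b, hST hb, hab⟩

theorem hasInversion_cons {a : Var} {S : Set Var} :
    HasInversion (a :: w) S ↔ HasInversion w S ∨ (vstar a ∈ S ∧ ∃ b ∈ w, b ∈ S) := by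
  simp only [HasInversion, List.sublist_cons_iff]
  constructor
  · rintro ⟨c, hc, b, hb, h | ⟨r, hr, hrw⟩⟩
    · exact Or.inl ⟨c, hc, b, hb, h⟩
    · obtain ⟨rfl, rfl⟩ := List.cons_eq_cons.mp hr
      exact Or.inr ⟨by simpa using hc, b, List.singleton_sublist.mp hrw, hb⟩
  · rintro (⟨c, hc, b, hb, h⟩ | ⟨ha, b, hbw, hb⟩)
    · exact ⟨c, hc, b, hb, Or.inl h⟩
    · exact ⟨vstar a, ha, b, hb, Or.inr ⟨[b], by simp, List.singleton_sublist.mpr hbw⟩⟩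

end Words

namespace BalancedId

variable {u v : Word}

theorem symm (h : BalancedId u v) : BalancedId v u := fun x => (h x).symm

theorem mem_iff (h : BalancedId u v) {x : Var} : x ∈ u ↔ x ∈ v := by
  rw [← List.count_pos_iff, ← List.count_pos_iff, h x]

theorem mix_iff (h : BalancedId u v) {x : Var} : Mix u x ↔ Mix v x :=
  and_congr h.mem_iff h.mem_iff

theorem condII_symm (hbal : BalancedId u v) (h : CondII u v) : CondII v u := by
  intro x y hx hy
  simp only [← hbal.mix_iff, iff_comm (a := PrecAll v _ _), iff_comm (a := Prec v _ _)]
  exact h x y (hbal.mem_iff.mpr hx) (hbal.mem_iff.mpr hy)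

theorem condII_of_hasInversion_iff (hbal : BalancedId u v)
    (h : ∀ S, HasInversion u S ↔ HasInversion v S) : CondII u v := by
  intro x y hxu hyu
  have hxv := hbal.mem_iff.mp hxu
  refine ⟨fun ⟨_, _⟩ => ?_, fun ⟨hmx, hmy⟩ => ?_, fun ⟨hmx, hmy⟩ => ?_⟩
  · by_cases hyx : y = vstar x
    · subst hyx
      exact iff_of_false (not_precAll_vstar hxu) (not_precAll_vstar hxv)
    · rw [precAll_iff_not_hasInversion hyx, precAll_iff_not_hasInversion hyx, h]
  · have hyu := vstar_not_mem_of_not_mix hmy hyu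
    have hyv : vstar y ∉ v := hbal.mem_iff.not.mp hyu
    have hxy : x ≠ y := fun h => hmy (h ▸ hmx)
    have hyx : y ≠ vstar x := fun h => hmy (h ▸ hmx.vstar)
    rw [precAll_singleton_pair_iff hyu hxy, precAll_singleton_pair_iff hyv hxy,
      precAll_pair_singleton_iff hyu hyx, precAll_pair_singleton_iff hyv hyx, h, h]
    exact ⟨Iff.rfl, Iff.rfl⟩
  · by_cases hxy : x = y
    · subst hxy
      exact iff_of_false (not_prec_self hxu) (not_prec_self hxv)
    have hxu' := vstar_not_mem_of_not_mix hmx hxu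
    have hyu' := vstar_not_mem_of_not_mix hmy hyu
    rw [prec_iff_not_hasInversion hxu' hyu' hxy,
      prec_iff_not_hasInversion (hbal.mem_iff.not.mp hxu') (hbal.mem_iff.not.mp hyu') hxy, h]

theorem hasInversion_pair_iff_of_condII (hbal : BalancedId u v) (hcond : CondII u v)
    {c d : Var} (hc : c ∈ u) (hd : vstar d ∈ u) (hcd : c ≠ vstar d) :
    HasInversion u {c, d} ↔ HasInversion v {c, d} := by
  have hdc : d ≠ vstar c := fun h => hcd (by rw [h, vstar_vstar])
  have mem_v {a : Var} (ha : a ∉ u) : a ∉ v := hbal.mem_iff.not.mp ha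
  rw [← not_iff_not]
  by_cases hmc : Mix u c <;> by_cases hmd : Mix u (vstar d)
  · have hmd : Mix u d := by simpa using hmd.vstar
    rw [← precAll_iff_not_hasInversion hdc, ← precAll_iff_not_hasInversion hdc]
    exact (hcond c d hc hmd.1).1 ⟨hmc, hmd⟩
  · have hdu : vstar (vstar d) ∉ u := vstar_not_mem_of_not_mix hmd hd
    rw [← vstar_vstar d, ← precAll_singleton_pair_iff hdu hcd,
      ← precAll_singleton_pair_iff (mem_v hdu) hcd]
    exact ((hcond c (vstar d) hc hd).2.1 ⟨hmc, hmd⟩).1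
  · have hmd : Mix u d := by simpa using hmd.vstar
    have hcu : vstar c ∉ u := vstar_not_mem_of_not_mix hmc hc
    rw [Set.pair_comm, ← precAll_pair_singleton_iff hcu hcd,
      ← precAll_pair_singleton_iff (mem_v hcu) hcd]
    exact ((hcond d c hmd.1 hc).2.1 ⟨hmd, hmc⟩).2
  · have hcu : vstar c ∉ u := vstar_not_mem_of_not_mix hmc hc
    have hdu : vstar (vstar d) ∉ u := vstar_not_mem_of_not_mix hmd hd
    rw [← vstar_vstar d, ← prec_iff_not_hasInversion hcu hdu hcd,
      ← prec_iff_not_hasInversion (mem_v hcu) (mem_v hdu) hcd]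
    exact (hcond c (vstar d) hc hd).2.2 ⟨hmc, hmd⟩

theorem hasInversion_of_condII (hbal : BalancedId u v) (hcond : CondII u v) {S : Set Var}
    (h : HasInversion u S) : HasInversion v S := by
  obtain ⟨a, ha, b, hb, hab⟩ := h
  refine HasInversion.mono (Set.pair_subset hb ha) ?_
  by_cases hba : b = vstar a
  · subst hba
    -- a repeated letter is seen by the balance condition alone
    have h2 : 2 ≤ u.count (vstar a) := List.replicate_sublist_iff.mp (by simpa using hab)
    have : List.replicate 2 (vstar a) <+ v := List.replicate_sublist_iff.mpr (hbal (vstar a) ▸ h2)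
    exact ⟨a, by simp, vstar a, by simp, this⟩
  · have hbu : b ∈ u := hab.subset (by simp)
    have hau : vstar a ∈ u := hab.subset (by simp)
    exact (hasInversion_pair_iff_of_condII hbal hcond hbu hau hba).mp ⟨a, by simp, b, by simp, hab⟩

theorem hasInversion_iff_of_condII (hbal : BalancedId u v) (hcond : CondII u v) (S : Set Var) :
    HasInversion u S ↔ HasInversion v S :=
  ⟨hasInversion_of_condII hbal hcond, hasInversion_of_condII hbal.symm (hbal.condII_symm hcond)⟩

end BalancedId

section Evaluation

variable {M N : Type*} [Monoid M] [Monoid N] {sM : M → M} {sN : N → N}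

theorem evalW_cons (s : M → M) (φ : ℕ → M) (a : Var) (w : Word) :
    evalW s φ (a :: w) = evalVar s φ a * evalW s φ w :=
  List.prod_cons

theorem evalW_map (f : M →* N) (hf : ∀ x, f (sM x) = sN (f x)) (φ : ℕ → M) (w : Word) :
    f (evalW sM φ w) = evalW sN (f ∘ φ) w := by
  induction w with
  | nil => exact map_one f
  | cons a w ih =>
    rw [evalW_cons, evalW_cons, map_mul, ih]
    unfold evalVar
    split_ifs <;> simp [hf]

theorem SatW.of_injective {u v : Word} (f : M →* N) (hf_inj : Function.Injective f)
    (hf : ∀ x, f (sM x) = sN (f x)) (h : SatW sN u v) : SatW sM u v :=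
  fun φ => hf_inj <| by rw [evalW_map f hf, evalW_map f hf]; exact h _

theorem SatW.evalW_eq_of_forall_mem_range {u v : Word} (f : M →* N)
    (hf : ∀ x, f (sM x) = sN (f x)) (h : SatW sM u v) {ψ : ℕ → N}
    (hψ : ∀ n, ψ n ∈ Set.range f) : evalW sN ψ u = evalW sN ψ v := by
  choose φ hφ using hψ
  obtain rfl : f ∘ φ = ψ := funext hφ
  rw [← evalW_map f hf, ← evalW_map f hf, h φ]

end Evaluation

@[ext] structure HypoTwoModel where
  ones : ℕ
  twos : ℕ
  inverted : Prop

namespace HypoTwoModel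

instance : Mul HypoTwoModel :=
  ⟨fun m n => ⟨m.ones + n.ones, m.twos + n.twos,
    m.inverted ∨ n.inverted ∨ (0 < m.twos ∧ 0 < n.ones)⟩⟩

instance : One HypoTwoModel := ⟨⟨0, 0, False⟩⟩

@[simp] theorem ones_mul (m n : HypoTwoModel) : (m * n).ones = m.ones + n.ones := rfl
@[simp] theorem twos_mul (m n : HypoTwoModel) : (m * n).twos = m.twos + n.twos := rfl
@[simp] theorem inverted_mul (m n : HypoTwoModel) :
    (m * n).inverted = (m.inverted ∨ n.inverted ∨ (0 < m.twos ∧ 0 < n.ones)) := rfl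
@[simp] theorem ones_one : (1 : HypoTwoModel).ones = 0 := rfl
@[simp] theorem twos_one : (1 : HypoTwoModel).twos = 0 := rfl
@[simp] theorem inverted_one : (1 : HypoTwoModel).inverted = False := rfl

instance : Monoid HypoTwoModel where
  mul_assoc a b c := by
    ext
    · exact Nat.add_assoc ..
    · exact Nat.add_assoc ..
    · simp only [inverted_mul, twos_mul, ones_mul]
      grind
  one_mul a := by ext <;> simp
  mul_one a := by ext <;> simp

/-- Reversing a word and exchanging its letters `1 ↔ 2` turns an inversion `2 ⋯ 1` into an
inversion again. -/
def star (m : HypoTwoModel) : HypoTwoModel := ⟨m.twos, m.ones, m.inverted⟩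

theorem star_mul (m n : HypoTwoModel) : star (m * n) = star n * star m := by
  ext
  · exact Nat.add_comm ..
  · exact Nat.add_comm ..
  · simp only [star, inverted_mul]
    tauto

def letter : Fin 2 → HypoTwoModel := ![⟨1, 0, False⟩, ⟨0, 1, False⟩]

theorem letter_zero_pow (k : ℕ) : letter 0 ^ k = ⟨k, 0, False⟩ := by
  induction k with
  | zero => rfl
  | succ k ih => rw [pow_succ, ih]; ext <;> simp [letter]

theorem letter_one_pow (k : ℕ) : letter 1 ^ k = ⟨0, k, False⟩ := by
  induction k with
  | zero => rfl
  | succ k ih => rw [pow_succ, ih]; ext <;> simp [letter]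

theorem letter_zero_mul (m : HypoTwoModel) :
    letter 0 * m = ⟨m.ones + 1, m.twos, m.inverted⟩ := by
  ext <;> simp [letter, add_comm]

theorem letter_one_mul (m : HypoTwoModel) :
    letter 1 * m = ⟨m.ones, m.twos + 1, m.inverted ∨ 0 < m.ones⟩ := by
  ext <;> simp [letter, add_comm]

/-- Elements in the image of `hypo₂`: an inversion needs both letters. -/
def Valid (m : HypoTwoModel) : Prop := m.inverted → 0 < m.ones ∧ 0 < m.twos

variable (ψ : ℕ → HypoTwoModel)

theorem ones_evalW (w : Word) :
    (evalW star ψ w).ones = (w.map fun a => (evalVar star ψ a).ones).sum := by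
  induction w with
  | nil => rfl
  | cons a w ih => rw [evalW_cons, ones_mul, ih, List.map_cons, List.sum_cons]

theorem twos_evalW (w : Word) :
    (evalW star ψ w).twos = (w.map fun a => (evalVar star ψ a).twos).sum := by
  induction w with
  | nil => rfl
  | cons a w ih => rw [evalW_cons, twos_mul, ih, List.map_cons, List.sum_cons]

theorem ones_evalVar_vstar (a : Var) :
    (evalVar star ψ (vstar a)).ones = (evalVar star ψ a).twos := by
  obtain ⟨n, _ | _⟩ := a <;> rfl

theorem inverted_evalVar (a : Var) : (evalVar star ψ a).inverted = (ψ a.1).inverted := by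
  obtain ⟨n, _ | _⟩ := a <;> rfl

theorem ones_evalW_pos (w : Word) :
    0 < (evalW star ψ w).ones ↔ ∃ a ∈ w, 0 < (evalVar star ψ a).ones := by
  rw [ones_evalW, List.sum_pos_iff_exists_pos_nat]
  simp only [List.mem_map, exists_exists_and_eq_and]

theorem inverted_evalW (w : Word) :
    (evalW star ψ w).inverted ↔
      (∃ a ∈ w, (ψ a.1).inverted) ∨ HasInversion w {a | 0 < (evalVar star ψ a).ones} := by
  induction w with
  | nil => simp [evalW, HasInversion]
  | cons a w ih =>
    rw [evalW_cons, inverted_mul, ih, inverted_evalVar, hasInversion_cons, ones_evalW_pos,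
      ← ones_evalVar_vstar]
    simp only [List.mem_cons, exists_eq_or_imp, or_assoc]
    rfl

noncomputable def indicatorAssignment (S : Set Var) (n : ℕ) : HypoTwoModel :=
  ⟨S.indicator 1 (n, false), S.indicator 1 (n, true), False⟩

theorem ones_evalVar_indicatorAssignment (S : Set Var) (a : Var) :
    (evalVar star (indicatorAssignment S) a).ones = S.indicator 1 a := by
  obtain ⟨n, _ | _⟩ := a <;> rfl

theorem ones_evalW_indicatorAssignment_singleton (x : Var) (w : Word) :
    (evalW star (indicatorAssignment {x}) w).ones = w.count x := by
  induction w with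
  | nil => rfl
  | cons a w ih =>
    rw [evalW_cons, ones_mul, ih, ones_evalVar_indicatorAssignment, List.count_cons, add_comm]
    by_cases h : a = x <;> simp [h]

theorem inverted_evalW_indicatorAssignment (S : Set Var) (w : Word) :
    (evalW star (indicatorAssignment S) w).inverted ↔ HasInversion w S := by
  have hS : {a | 0 < (evalVar star (indicatorAssignment S) a).ones} = S := by
    ext a
    by_cases ha : a ∈ S <;> simp [ones_evalVar_indicatorAssignment, ha]
  simp [inverted_evalW, hS, indicatorAssignment]

end HypoTwoModel

theorem hypoSharp_mul {n : ℕ} (x y : Hypo n) :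
    hypoSharp n (x * y) = hypoSharp n y * hypoSharp n x :=
  Con.induction_on₂ x y fun u v => congrArg ((↑) : _ → Hypo n) (wordSharp_mul u v)

namespace HypoTwo

open HypoTwoModel

/-- `0 : Fin 2` stands for the letter `1` and `1 : Fin 2` for the letter `2`. -/
def gen (a : Fin 2) : Hypo 2 := ((FreeMonoid.of a : FreeMonoid (Fin 2)) : Hypo 2)

local notation "e₁" => gen 0
local notation "e₂" => gen 1

theorem gen_induction {P : Hypo 2 → Prop} (one : P 1) (gen_mul : ∀ a x, P x → P (gen a * x))
    (x : Hypo 2) : P x :=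
  Con.induction_on x fun w => FreeMonoid.inductionOn' w one fun a w h => gen_mul a w h

theorem hypoRel_two_cases {u v : FreeMonoid (Fin 2)} (h : HypoRel 2 u v) :
    open FreeMonoid in
    (u = of 0 * of 1 * of 0 ∧ v = of 1 * of 0 * of 0) ∨
    (u = of 1 * of 0 * of 1 ∧ v = of 1 * of 1 * of 0) ∨
    (u = of 1 * of 0 * of 1 * of 0 ∧ v = of 0 * of 1 * of 0 * of 1) := by
  rcases h with ⟨a, b, c, hab, hbc, rfl, rfl⟩ | ⟨a, b, c, hab, hbc, rfl, rfl⟩ |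
    ⟨a, b, c, d, hab, hbc, hcd, rfl, rfl⟩ | ⟨a, b, c, d, hab, hbc, hcd, rfl, rfl⟩ <;>
  fin_cases a <;> fin_cases b <;> fin_cases c <;> try fin_cases d
  all_goals simp_all

theorem gen_rel {u v : FreeMonoid (Fin 2)} (h : HypoRel 2 u v) : (u : Hypo 2) = v :=
  (Con.eq _).mpr (ConGen.Rel.of _ _ h)

theorem e₁_e₂_e₁ : e₁ * e₂ * e₁ = e₂ * e₁ * e₁ :=
  gen_rel (Or.inl ⟨0, 0, 1, le_rfl, by decide, rfl, rfl⟩)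

theorem e₂_e₁_e₂ : e₂ * e₁ * e₂ = e₂ * e₂ * e₁ :=
  gen_rel (Or.inr (Or.inl ⟨0, 1, 1, by decide, le_rfl, rfl, rfl⟩))

theorem e₂_e₁_e₂_e₁ : e₂ * e₁ * e₂ * e₁ = e₁ * e₂ * e₁ * e₂ :=
  gen_rel (Or.inr (Or.inr (Or.inl ⟨0, 0, 1, 1, le_rfl, by decide, le_rfl, rfl, rfl⟩)))

theorem e₂_mul_e₁_pow_succ (k : ℕ) : e₂ * e₁ ^ (k + 1) = e₁ ^ k * (e₂ * e₁) := by
  induction k with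
  | zero => simp
  | succ k ih =>
    rw [pow_succ, ← mul_assoc, ih, mul_assoc, ← e₁_e₂_e₁, pow_succ]
    simp only [mul_assoc]

theorem e₂_mul_e₁_pow_mul_e₂_e₁ (k : ℕ) :
    e₂ * (e₁ ^ k * (e₂ * e₁)) = e₁ ^ k * (e₂ * e₁) * e₂ := by
  cases k with
  | zero => simp only [pow_zero, one_mul, ← mul_assoc, e₂_e₁_e₂]
  | succ k =>
    rw [← mul_assoc, e₂_mul_e₁_pow_succ, pow_succ]
    simp only [mul_assoc]
    congr 1
    simpa only [mul_assoc] using e₂_e₁_e₂_e₁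

def toModel : Hypo 2 →* HypoTwoModel :=
  (hypoCon 2).lift (FreeMonoid.lift letter) <| Con.conGen_le.mpr fun _ _ h => by
    rcases hypoRel_two_cases h with ⟨rfl, rfl⟩ | ⟨rfl, rfl⟩ | ⟨rfl, rfl⟩ <;>
      ext <;> simp [letter]

theorem toModel_gen (a : Fin 2) : toModel (gen a) = letter a := rfl

theorem valid_toModel (x : Hypo 2) : (toModel x).Valid := by
  induction x using gen_induction with
  | one => simp [Valid]
  | gen_mul a x ih =>
    rw [map_mul, toModel_gen]
    fin_cases a
    · simp only [Fin.zero_eta, letter_zero_mul, Valid]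
      exact fun h => ⟨Nat.succ_pos _, (ih h).2⟩
    · simp only [Fin.mk_one, letter_one_mul, Valid]
      exact fun h => ⟨h.elim (fun h => (ih h).1) id, Nat.succ_pos _⟩

open Classical in
/-- The normal forms `1ᵖ 2^q` and `1^(p-1) 2 1 2^(q-1)` of `hypo₂`. -/
noncomputable def normalForm (m : HypoTwoModel) : Hypo 2 :=
  if m.inverted then e₁ ^ (m.ones - 1) * (e₂ * e₁) * e₂ ^ (m.twos - 1)
  else e₁ ^ m.ones * e₂ ^ m.twos

theorem normalForm_letter_mul (a : Fin 2) {m : HypoTwoModel} (hm : m.Valid) :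
    normalForm (letter a * m) = gen a * normalForm m := by
  obtain ⟨p, q, inv⟩ := m
  fin_cases a
  · by_cases h : inv
    · obtain ⟨p, rfl⟩ := Nat.exists_eq_add_one_of_ne_zero (hm h).1.ne'
      simp [letter_zero_mul, normalForm, h, pow_succ', mul_assoc]
    · simp [letter_zero_mul, normalForm, h, pow_succ', mul_assoc]
  · rw [Fin.mk_one, letter_one_mul]
    by_cases h : inv
    · obtain ⟨p, rfl⟩ := Nat.exists_eq_add_one_of_ne_zero (hm h).1.ne'
      obtain ⟨q, rfl⟩ := Nat.exists_eq_add_one_of_ne_zero (hm h).2.ne'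
      rw [normalForm, normalForm, if_pos (Or.inl h), if_pos h]
      simp only [Nat.add_sub_cancel]
      rw [← mul_assoc e₂, e₂_mul_e₁_pow_mul_e₂_e₁, mul_assoc _ e₂, ← pow_succ']
    · rcases p with _ | p
      · simp [normalForm, h, pow_succ']
      · rw [normalForm, normalForm, if_pos (Or.inr p.succ_pos), if_neg h]
        simp only [Nat.add_sub_cancel]
        rw [← mul_assoc e₂, e₂_mul_e₁_pow_succ]

theorem normalForm_toModel (x : Hypo 2) : normalForm (toModel x) = x := by
  induction x using gen_induction with
  | one => simp [normalForm]
  | gen_mul a x ih => rw [map_mul, toModel_gen, normalForm_letter_mul a (valid_toModel x), ih]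

theorem toModel_injective : Function.Injective toModel :=
  Function.LeftInverse.injective normalForm_toModel

theorem mk_mem_range_toModel (p q : ℕ) : (⟨p, q, False⟩ : HypoTwoModel) ∈ Set.range toModel := by
  refine ⟨e₁ ^ p * e₂ ^ q, ?_⟩
  rw [map_mul, map_pow, map_pow, toModel_gen, toModel_gen, letter_zero_pow, letter_one_pow]
  ext <;> simp

theorem toModel_hypoSharp (x : Hypo 2) : toModel (hypoSharp 2 x) = star (toModel x) := by
  induction x using gen_induction with
  | one => rfl
  | gen_mul a x ih =>
    rw [hypoSharp_mul, map_mul, ih, map_mul, star_mul]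
    congr 1
    fin_cases a <;> rfl

end HypoTwo

open HypoTwoModel in
theorem satW_hypoSharp_two_iff {u v : Word} :
    SatW (hypoSharp 2) u v ↔ BalancedId u v ∧ ∀ S, HasInversion u S ↔ HasInversion v S := by
  constructor
  · intro h
    have heval (S : Set Var) := h.evalW_eq_of_forall_mem_range HypoTwo.toModel
      HypoTwo.toModel_hypoSharp (ψ := indicatorAssignment S) fun _ =>
        HypoTwo.mk_mem_range_toModel _ _
    refine ⟨fun x => ?_, fun S => ?_⟩
    · rw [← ones_evalW_indicatorAssignment_singleton, ← ones_evalW_indicatorAssignment_singleton,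
        heval]
    · rw [← inverted_evalW_indicatorAssignment, ← inverted_evalW_indicatorAssignment, heval]
  · rintro ⟨hbal, hinv⟩
    refine SatW.of_injective HypoTwo.toModel HypoTwo.toModel_injective
      HypoTwo.toModel_hypoSharp fun ψ => ?_
    have hperm : u.Perm v := List.perm_iff_count.mpr hbal
    ext
    · rw [ones_evalW, ones_evalW, (hperm.map _).sum_eq]
    · rw [twos_evalW, twos_evalW, (hperm.map _).sum_eq]
    · rw [inverted_evalW, inverted_evalW, hinv]
      simp only [hperm.mem_iff]

theorem stmt_8_general (u v : Word) :
    SatW (hypoSharp 2) u v ↔ BalancedId u v ∧ CondII u v := by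
  rw [satW_hypoSharp_two_iff]
  exact and_congr_right fun hbal =>
    ⟨hbal.condII_of_hasInversion_iff, hbal.hasInversion_iff_of_condII⟩

/-- **Theorem 4.3.** A word identity `u ≈ v` holds in `(hypo₂, ♯)` if and only if
(i) `u ≈ v` is balanced and (ii) the occurrence-order conditions (a)–(c) hold. -/
theorem stmt_8 (u v : Word) (hu : u ≠ []) (hv : v ≠ []) :
    SatW (hypoSharp 2) u v ↔ BalancedId u v ∧ CondII u v :=
  stmt_8_general u v
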